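/- arXiv:math/0404419 — 2 statements merged into one kernel-verified Lean document; each statement's English description precedes it below -/
import Mathlib

section
/- Let R be a connected graded k-algebra and 0 → K → M → N → 0 a short exact sequence of finitely generated graded right R-modules. If any two of the modules K, M, N are effectively coherent, then so is the third. Moreover: if D_M witnesses the effective coherence of M, then D_M also witnesses that of K; if D_K and D_N witness the effective coherence of K and N respectively, then d ↦ D_K(max{d, D_N(d)}) witnesses that of M; and if D_M witnesses the effective coherence of M and K is generated in degrees ≤ m(K), then d ↦ D_M(max{d, m(K)}) witnesses that of N. -/
open MulOpposite

namespace NCG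

variable (k : Type) [Field k] (R : Type) [Ring R] [Algebra k R]

/-- `𝒜` is a connected grading on the `k`-algebra `R`: the graded pieces multiply
correctly, `R` is their internal direct sum, and the degree-zero piece is `k·1`. -/
def IsConnAlg (𝒜 : ℕ → Submodule k R) : Prop :=
  (∀ (i j : ℕ), ∀ x ∈ 𝒜 i, ∀ y ∈ 𝒜 j, x * y ∈ 𝒜 (i + j)) ∧
  DirectSum.IsInternal 𝒜 ∧
  𝒜 0 = Submodule.span k {(1 : R)}

/-- `R` is locally finite: every graded piece is finite-dimensional over `k`. -/
def LocFin (𝒜 : ℕ → Submodule k R) : Prop := ∀ i, FiniteDimensional k (𝒜 i)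

/-- `R` is a finitely generated `k`-algebra. -/
def FinGenAlg : Prop := ∃ s : Finset R, Algebra.adjoin k (s : Set R) = ⊤

/-- extension of the grading to `ℤ` (zero in negative degrees). -/
noncomputable def grZ (𝒜 : ℕ → Submodule k R) : ℤ → Submodule k R :=
  fun j => if 0 ≤ j then 𝒜 j.toNat else ⊥

/-- the augmentation ideal `R_{≥1}`, as a right ideal of `R`. -/
def aug (𝒜 : ℕ → Submodule k R) : Submodule Rᵐᵒᵖ R :=
  Submodule.span Rᵐᵒᵖ (⋃ i : ℕ, ⋃ _ : 1 ≤ i, ((𝒜 i : Set R)))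

variable (M : Type) [AddCommGroup M] [Module Rᵐᵒᵖ M] [Module k M]

/-- `ℳ` makes `M` a graded right module over the graded algebra `(R, 𝒜)`. -/
def IsGradedMod (𝒜 : ℕ → Submodule k R) (ℳ : ℤ → Submodule k M) : Prop :=
  (∀ (i : ℕ) (j : ℤ), ∀ r ∈ 𝒜 i, ∀ x ∈ ℳ j, (op r) • x ∈ ℳ (j + i)) ∧
  DirectSum.IsInternal ℳ

/-- the submodule `N` of `M` is generated in degrees at most `dd`. -/
def GenLE (ℳ : ℤ → Submodule k M) (N : Submodule Rᵐᵒᵖ M) (dd : ℤ) : Prop :=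
  N ≤ Submodule.span Rᵐᵒᵖ {x : M | x ∈ N ∧ ∃ j ≤ dd, x ∈ ℳ j}

/-- the submodule `N` is a graded (homogeneous) submodule of `M`. -/
def IsGradedSub (ℳ : ℤ → Submodule k M) (N : Submodule Rᵐᵒᵖ M) : Prop :=
  N ≤ Submodule.span Rᵐᵒᵖ {x : M | x ∈ N ∧ ∃ j : ℤ, x ∈ ℳ j}

/-- the Hilbert series of a submodule `N` of `M`, as its coefficient function. -/
noncomputable def hilb (ℳ : ℤ → Submodule k M) [IsScalarTower k Rᵐᵒᵖ M]
    (N : Submodule Rᵐᵒᵖ M) : ℤ → ℕ :=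
  fun j => Module.finrank k ↥(ℳ j ⊓ N.restrictScalars k)

/-- the Hilbert series of a right ideal of `R`, as its coefficient function. -/
noncomputable def hilbI (𝒜 : ℕ → Submodule k R) (I : Submodule Rᵐᵒᵖ R) : ℕ → ℕ :=
  fun j => Module.finrank k ↥(𝒜 j ⊓ I.restrictScalars k)

/-- the Hilbert series of the algebra `R`, as its coefficient function. -/
noncomputable def hilbA (𝒜 : ℕ → Submodule k R) : ℕ → ℕ :=
  fun j => Module.finrank k ↥(𝒜 j)

/-- `v` is a solution of the homogeneous linear equation `a₁x₁ + ⋯ + aₙxₙ = 0`. -/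
def IsSol {n : ℕ} (a : Fin n → M) (v : Fin n → R) : Prop :=
  ∑ i, op (v i) • a i = 0

/-- `w` is a homogeneous element of degree `j` of the free module `⊕ᵢ R(-dg i)`. -/
def FreeHomog (𝒜 : ℕ → Submodule k R) {n : ℕ} (dg : Fin n → ℤ)
    (w : Fin n → R) (j : ℤ) : Prop :=
  ∀ i, w i ∈ grZ k R 𝒜 (j - dg i)

/-- The module of solutions of the equation with homogeneous coefficients `a` (of
degrees `dg`) is generated in degrees at most `D`: every solution is an `R`-linear
combination of homogeneous solutions of degree at most `D`. -/
def SolGenLE (𝒜 : ℕ → Submodule k R) {n : ℕ} (a : Fin n → M) (dg : Fin n → ℤ)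
    (D : ℤ) : Prop :=
  ∀ v : Fin n → R, IsSol R M a v →
    v ∈ Submodule.span Rᵐᵒᵖ
      {w : Fin n → R | IsSol R M a w ∧ ∃ j ≤ D, FreeHomog k R 𝒜 dg w j}

/-- The module of solutions of the equation with coefficients `a` is generated by the
(finitely many) solutions `h`. -/
def SolSpanBy {n : ℕ} (a : Fin n → M) {m : ℕ} (h : Fin m → (Fin n → R)) : Prop :=
  (∀ j, IsSol R M a (h j)) ∧
  ∀ v : Fin n → R, IsSol R M a v → v ∈ Submodule.span Rᵐᵒᵖ (Set.range h)

/-- `D` witnesses the effective coherence of the graded module `M`. -/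
def WitnessEC (𝒜 : ℕ → Submodule k R) (ℳ : ℤ → Submodule k M) (D : ℕ → ℕ) : Prop :=
  (∀ d, d ≤ D d) ∧
  ∀ (d n : ℕ) (a : Fin n → M) (dg : Fin n → ℤ),
    (∀ i, a i ∈ ℳ (dg i)) → (∀ i, dg i ≤ (d : ℤ)) →
    SolGenLE k R M 𝒜 a dg ((D d : ℕ) : ℤ)

/-- the graded module `M` is effectively coherent. -/
def EffCoh (𝒜 : ℕ → Submodule k R) (ℳ : ℤ → Submodule k M) : Prop :=
  ∃ D : ℕ → ℕ, WitnessEC k R M 𝒜 ℳ D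

/-- the algebra `R` is effectively coherent (as a right module over itself). -/
noncomputable def EffCohAlg (𝒜 : ℕ → Submodule k R) : Prop :=
  EffCoh k R R 𝒜 (grZ k R 𝒜)

/-- `M` is a finitely presented graded right `R`-module. -/
def ModFinPres (𝒜 : ℕ → Submodule k R) (ℳ : ℤ → Submodule k M) : Prop :=
  ∃ (t : ℕ) (b : Fin t → M) (db : Fin t → ℤ),
    (∀ i, b i ∈ ℳ (db i)) ∧ Submodule.span Rᵐᵒᵖ (Set.range b) = ⊤ ∧
    ∃ (m : ℕ) (h : Fin m → (Fin t → R)) (e : Fin m → ℤ),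
      (∀ j, FreeHomog k R 𝒜 db (h j) (e j)) ∧ SolSpanBy R M b h

/-- `R` is a finitely presented algebra: there is an exact sequence
`F₂ → F₁ → R → k_R → 0` of graded right modules with `F₁, F₂` finite graded free. -/
def AlgFinPres (𝒜 : ℕ → Submodule k R) : Prop :=
  ∃ (n : ℕ) (g : Fin n → R) (dg : Fin n → ℕ),
    (∀ i, g i ∈ 𝒜 (dg i)) ∧
    Submodule.span Rᵐᵒᵖ (Set.range g) = aug k R 𝒜 ∧
    ∃ (m : ℕ) (h : Fin m → (Fin n → R)) (e : Fin m → ℤ),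
      (∀ j, FreeHomog k R 𝒜 (fun i => (dg i : ℤ)) (h j) (e j)) ∧
      SolSpanBy R R g h

/-- `R` admits an exact sequence `F₃ → F₂ → F₁ → R → k_R → 0` of graded right modules
with all `Fᵢ` finite graded free (finitely presented with `dim Tor₃ < ∞`). -/
def AlgFinPres3 (𝒜 : ℕ → Submodule k R) : Prop :=
  ∃ (n : ℕ) (g : Fin n → R) (dg : Fin n → ℕ),
    (∀ i, g i ∈ 𝒜 (dg i)) ∧
    Submodule.span Rᵐᵒᵖ (Set.range g) = aug k R 𝒜 ∧
    ∃ (m : ℕ) (h : Fin m → (Fin n → R)) (e : Fin m → ℤ),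
      (∀ j, FreeHomog k R 𝒜 (fun i => (dg i : ℤ)) (h j) (e j)) ∧
      SolSpanBy R R g h ∧
      ∃ (p : ℕ) (u : Fin p → (Fin m → R)) (f : Fin p → ℤ),
        (∀ l, FreeHomog k R 𝒜 e (u l) (f l)) ∧
        SolSpanBy R (Fin n → R) h u

/-- membership in the class `D(n,a,b,c)`: there is an exact sequence
`F₃ → F₂ → F₁ → R → k_R → 0` with `F₁` of rank at most `n` and basis in degrees `≤ a`,
`F₂` with basis in degrees `≤ b` and `F₃` with basis in degrees `≤ c`. -/
def InDClass (𝒜 : ℕ → Submodule k R) (n a b c : ℕ) : Prop :=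
  ∃ (n' : ℕ), n' ≤ n ∧ ∃ (g : Fin n' → R) (dg : Fin n' → ℕ),
    (∀ i, dg i ≤ a) ∧ (∀ i, g i ∈ 𝒜 (dg i)) ∧
    Submodule.span Rᵐᵒᵖ (Set.range g) = aug k R 𝒜 ∧
    ∃ (m : ℕ) (h : Fin m → (Fin n' → R)) (e : Fin m → ℤ),
      (∀ j, e j ≤ (b : ℤ)) ∧
      (∀ j, FreeHomog k R 𝒜 (fun i => (dg i : ℤ)) (h j) (e j)) ∧
      SolSpanBy R R g h ∧
      SolGenLE k R (Fin n' → R) 𝒜 h e (c : ℤ)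

/-- the right ideal `I` has a finite homogeneous generating family in degrees `≤ d`. -/
def FinGenLE (𝒜 : ℕ → Submodule k R) (I : Submodule Rᵐᵒᵖ R) (d : ℕ) : Prop :=
  ∃ (n : ℕ) (x : Fin n → R) (dx : Fin n → ℕ),
    (∀ i, dx i ≤ d) ∧ (∀ i, x i ∈ 𝒜 (dx i)) ∧
    Submodule.span Rᵐᵒᵖ (Set.range x) = I

/-- lexicographic strict order on `ℕ`-indexed coefficient functions: `f <_lex g`. -/
def LexLtN (f g : ℕ → ℕ) : Prop := ∃ q, (∀ i < q, f i = g i) ∧ f q < g q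

/-- lexicographic strict order on `ℤ`-indexed coefficient functions: `f <_lex g`. -/
def LexLtZ (f g : ℤ → ℕ) : Prop := ∃ q, (∀ i < q, f i = g i) ∧ f q < g q

/-- the right annihilator ideal of an element `a : R`. -/
def rAnn (a : R) : Submodule Rᵐᵒᵖ R where
  carrier := {r : R | a * r = 0}
  add_mem' := by
    intro x y hx hy
    simp only [Set.mem_setOf_eq] at *
    rw [mul_add, hx, hy, add_zero]
  zero_mem' := by simp
  smul_mem' := by
    intro c x hx
    simp only [Set.mem_setOf_eq] at *
    rw [← op_unop c, op_smul_eq_mul, ← mul_assoc, hx, zero_mul]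

/-- the colon right ideal `(x : J) = { a ∈ R | x·a ∈ J }`. -/
def colon (x : R) (J : Submodule Rᵐᵒᵖ R) : Submodule Rᵐᵒᵖ R where
  carrier := {a : R | x * a ∈ J}
  add_mem' := by
    intro p q hp hq
    simp only [Set.mem_setOf_eq] at *
    rw [mul_add]; exact J.add_mem hp hq
  zero_mem' := by simp
  smul_mem' := by
    intro c p hp
    simp only [Set.mem_setOf_eq] at *
    rw [← op_unop c, op_smul_eq_mul, ← mul_assoc]
    exact J.smul_mem (op (unop c)) hp

/-- `F` is a coherent family of right ideals of `R`. -/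
def IsCohFam (𝒜 : ℕ → Submodule k R) (F : Set (Submodule Rᵐᵒᵖ R)) : Prop :=
  (∀ I ∈ F, I.FG ∧ IsGradedSub k R R (grZ k R 𝒜) I) ∧
  (⊥ : Submodule Rᵐᵒᵖ R) ∈ F ∧ aug k R 𝒜 ∈ F ∧
  ∀ I ∈ F, I ≠ ⊥ → ∃ J ∈ F, J ≠ I ∧ ∃ x : R, (∃ dx : ℕ, x ∈ 𝒜 dx) ∧ x ∈ I ∧
    I = J ⊔ Submodule.span Rᵐᵒᵖ {x} ∧
    (∀ dI : ℤ, GenLE k R R (grZ k R 𝒜) I dI → GenLE k R R (grZ k R 𝒜) J dI) ∧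
    colon R x J ∈ F

/-- the family `F` of ideals has degree at most `d`. -/
def CohFamDegLE (𝒜 : ℕ → Submodule k R) (F : Set (Submodule Rᵐᵒᵖ R)) (d : ℕ) : Prop :=
  ∀ I ∈ F, GenLE k R R (grZ k R 𝒜) I (d : ℤ)

/-- the right ideal `I` is finitely presented as a graded module. -/
def IdealFinPres (𝒜 : ℕ → Submodule k R) (I : Submodule Rᵐᵒᵖ R) : Prop :=
  ∃ (n : ℕ) (x : Fin n → R) (dx : Fin n → ℕ),
    (∀ i, x i ∈ 𝒜 (dx i)) ∧ Submodule.span Rᵐᵒᵖ (Set.range x) = I ∧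
    ∃ (m : ℕ) (h : Fin m → (Fin n → R)) (e : Fin m → ℤ),
      (∀ j, FreeHomog k R 𝒜 (fun i => (dx i : ℤ)) (h j) (e j)) ∧
      SolSpanBy R R x h

/-- `R` is graded right coherent: every finitely generated homogeneous right ideal
is finitely presented as a graded module. -/
def GradedCoherent (𝒜 : ℕ → Submodule k R) : Prop :=
  ∀ I : Submodule Rᵐᵒᵖ R, I.FG → IsGradedSub k R R (grZ k R 𝒜) I →
    IdealFinPres k R 𝒜 I

/-- a free resolution of the right ideal `I` by finite graded free modules whose
bases at level `i` sit in degrees at most `B i`. -/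
def FreeResBdd (𝒜 : ℕ → Submodule k R) (I : Submodule Rᵐᵒᵖ R) (B : ℕ → ℤ) : Prop :=
  ∃ (r : ℕ → ℕ) (dgs : (i : ℕ) → Fin (r i) → ℤ)
    (g0 : Fin (r 0) → R)
    (g : (i : ℕ) → Fin (r (i + 1)) → (Fin (r i) → R)),
    (∀ l, dgs 0 l ≤ B 0) ∧
    (∀ l, g0 l ∈ grZ k R 𝒜 (dgs 0 l)) ∧
    Submodule.span Rᵐᵒᵖ (Set.range g0) = I ∧
    (∀ (i : ℕ) (l : Fin (r (i + 1))), dgs (i + 1) l ≤ B (i + 1)) ∧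
    (∀ (i : ℕ) (l : Fin (r (i + 1))), FreeHomog k R 𝒜 (dgs i) (g i l) (dgs (i + 1) l)) ∧
    SolSpanBy R R g0 (g 0) ∧
    (∀ i : ℕ, SolSpanBy R (Fin (r i) → R) (g i) (g (i + 1)))

/-- the Artin–Zhang property for a graded module `M`. -/
def ArtinZhang (ℳ : ℤ → Submodule k M) [IsScalarTower k Rᵐᵒᵖ M] : Prop :=
  ∀ h : ℤ → ℕ, ∃ d : ℤ, 0 < d ∧
    (∀ L : Submodule Rᵐᵒᵖ M, L.FG → hilb k R M ℳ L = h → GenLE k R M ℳ L d) ∧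
    (∀ L : Submodule Rᵐᵒᵖ M, GenLE k R M ℳ L d →
      (∀ j ≤ d, hilb k R M ℳ L j = h j) → hilb k R M ℳ L = h)

/-- `M` is effective for series: for each `d`, only finitely many Hilbert series of
submodules generated in degrees `≤ d`. -/
def EffForSeries (ℳ : ℤ → Submodule k M) [IsScalarTower k Rᵐᵒᵖ M] : Prop :=
  ∀ d : ℤ, {h : ℤ → ℕ | ∃ L : Submodule Rᵐᵒᵖ M,
    GenLE k R M ℳ L d ∧ h = hilb k R M ℳ L}.Finite

/-- `M` is effective for generators: the Hilbert series of a finitely generated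
submodule bounds the degrees of its generators. -/
def EffForGen (ℳ : ℤ → Submodule k M) [IsScalarTower k Rᵐᵒᵖ M] : Prop :=
  ∀ h : ℤ → ℕ, ∃ d : ℤ,
    ∀ L : Submodule Rᵐᵒᵖ M, L.FG → hilb k R M ℳ L = h → GenLE k R M ℳ L d

/-- bundled data of a graded `k`-algebra. -/
structure AlgData (k : Type) [Field k] : Type 1 where
  carrier : Type
  [ringStr : Ring carrier]
  [algStr : Algebra k carrier]
  grading : ℕ → Submodule k carrier

attribute [instance] AlgData.ringStr AlgData.algStr

/-- bundled data of a graded right `R`-module. -/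
structure ModData (k R : Type) [Field k] [Ring R] [Algebra k R] : Type 1 where
  carrier : Type
  [acg : AddCommGroup carrier]
  [modR : Module Rᵐᵒᵖ carrier]
  [modk : Module k carrier]
  [tower : IsScalarTower k Rᵐᵒᵖ carrier]
  grading : ℤ → Submodule k carrier

attribute [instance] ModData.acg ModData.modR ModData.modk ModData.tower


end NCG

set_option linter.unusedSectionVars false

section Helpers3

open MulOpposite

lemma NCG.decomp_exists {k M : Type} [Field k] [AddCommGroup M] [Module k M]
    {ℳ : ℤ → Submodule k M} (h : DirectSum.IsInternal ℳ) (x : M) :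
    ∃ (s : Finset ℤ) (c : ℤ → M), (∀ j, c j ∈ ℳ j) ∧ (∀ j ∉ s, c j = 0) ∧
      x = ∑ j ∈ s, c j := by
  classical
  letI := h.chooseDecomposition
  refine ⟨(DirectSum.decompose ℳ x).support, fun j => (DirectSum.decompose ℳ x j : M),
    fun j => (DirectSum.decompose ℳ x j).2, fun j hj => ?_,
    (DirectSum.sum_support_decompose ℳ x).symm⟩
  simp [DFinsupp.notMem_support_iff.mp hj]

lemma NCG.decomp_uniq {k M : Type} [Field k] [AddCommGroup M] [Module k M]
    {ℳ : ℤ → Submodule k M} (h : DirectSum.IsInternal ℳ) (s : Finset ℤ) (c : ℤ → M)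
    (hc : ∀ j, c j ∈ ℳ j) (e : ℤ) (hs : ∑ j ∈ s, c j ∈ ℳ e) :
    ∀ j ∈ s, j ≠ e → c j = 0 := by
  classical
  letI := h.chooseDecomposition
  intro j0 hj0 hne
  have h1 : DirectSum.decompose ℳ (∑ j ∈ s, c j)
      = DirectSum.of (fun i => ℳ i) e ⟨_, hs⟩ := DirectSum.decompose_of_mem ℳ hs
  have h2 : DirectSum.decompose ℳ (∑ j ∈ s, c j)
      = ∑ j ∈ s, DirectSum.of (fun i => ℳ i) j ⟨c j, hc j⟩ := by
    rw [DirectSum.decompose_sum]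
    exact Finset.sum_congr rfl fun j _ => DirectSum.decompose_of_mem ℳ (hc j)
  have h3 := congrArg (DirectSum.component k ℤ (fun i => ℳ i) j0) (h2.symm.trans h1)
  rw [map_sum] at h3
  simp only [← DirectSum.lof_eq_of k, DirectSum.component.of] at h3
  rw [Finset.sum_eq_single_of_mem j0 hj0 (fun b _ hb => by rw [dif_neg hb])] at h3
  rw [dif_pos rfl, dif_neg (Ne.symm hne)] at h3
  have := congrArg (Subtype.val) h3
  simpa using this

namespace NCG

variable {k R : Type} [Field k] [Ring R] [Algebra k R] {𝒜 : ℕ → Submodule k R}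

lemma grZ_mul (hmul : ∀ (i j : ℕ), ∀ x ∈ 𝒜 i, ∀ y ∈ 𝒜 j, x * y ∈ 𝒜 (i + j))
    {x y : R} {p q : ℤ} (hx : x ∈ grZ k R 𝒜 p) (hy : y ∈ grZ k R 𝒜 q) :
    x * y ∈ grZ k R 𝒜 (p + q) := by
  unfold grZ at *
  by_cases hp : 0 ≤ p
  · by_cases hq : 0 ≤ q
    · rw [if_pos hp] at hx; rw [if_pos hq] at hy
      rw [if_pos (by omega)]
      have h := hmul _ _ _ hx _ hy
      have hpq : (p + q).toNat = p.toNat + q.toNat := by omega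
      rwa [hpq]
    · rw [if_neg hq] at hy
      simp only [Submodule.mem_bot] at hy
      simp [hy]
  · rw [if_neg hp] at hx
    simp only [Submodule.mem_bot] at hx
    simp [hx]

variable {M : Type} [AddCommGroup M] [Module Rᵐᵒᵖ M] [Module k M]
  {ℳ : ℤ → Submodule k M}

lemma grZ_smul_mem
    (hsm : ∀ (i : ℕ) (j : ℤ), ∀ r ∈ 𝒜 i, ∀ x ∈ ℳ j, (op r) • x ∈ ℳ (j + i))
    {r : R} {x : M} {p q : ℤ} (hr : r ∈ grZ k R 𝒜 q) (hx : x ∈ ℳ p) :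
    op r • x ∈ ℳ (p + q) := by
  unfold grZ at hr
  by_cases hq : 0 ≤ q
  · rw [if_pos hq] at hr
    have h := hsm q.toNat p r hr x hx
    have he : p + (q.toNat : ℤ) = p + q := by omega
    rwa [he] at h
  · rw [if_neg hq] at hr
    simp only [Submodule.mem_bot] at hr
    simp [hr]

lemma homog_sum_mem
    (hsm : ∀ (i : ℕ) (j : ℤ), ∀ r ∈ 𝒜 i, ∀ x ∈ ℳ j, (op r) • x ∈ ℳ (j + i))
    {n : ℕ} {a : Fin n → M} {dg : Fin n → ℤ} (ha : ∀ i, a i ∈ ℳ (dg i))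
    {w : Fin n → R} {f : ℤ} (hw : FreeHomog k R 𝒜 dg w f) :
    ∑ i, op (w i) • a i ∈ ℳ f :=
  Submodule.sum_mem _ fun i _ => by
    have h := grZ_smul_mem hsm (hw i) (ha i)
    rwa [show dg i + (f - dg i) = f by ring] at h

lemma sum_op_smul_comm {mm n : ℕ} (w : Fin mm → Fin n → R) (u : Fin mm → R)
    (a : Fin n → M) :
    ∑ i, op (∑ j, w j i * u j) • a i = ∑ j, op (u j) • ∑ i, op (w j i) • a i := by
  simp only [Finset.op_sum, Finset.sum_smul, op_mul, mul_smul, Finset.smul_sum]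
  exact Finset.sum_comm

lemma mem_span_image {R' M1 M2 : Type} [Ring R'] [AddCommGroup M1] [Module R' M1]
    [AddCommGroup M2] [Module R' M2] (f : M1 →ₗ[R'] M2) {S : Set M1} {T : Set M2}
    (hST : f '' S ⊆ T) {x : M1} (hx : x ∈ Submodule.span R' S) :
    f x ∈ Submodule.span R' T :=
  Submodule.span_mono hST
    (by rw [← Submodule.map_span]; exact Submodule.mem_map_of_mem hx)

section TwoMods

variable {K : Type} [AddCommGroup K] [Module Rᵐᵒᵖ K] [Module k K]
  {𝒦 : ℤ → Submodule k K}

lemma graded_preimage (hK : DirectSum.IsInternal 𝒦) (hM : DirectSum.IsInternal ℳ)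
    (ι : K →ₗ[Rᵐᵒᵖ] M) (hinj : Function.Injective ι)
    (hgrι : ∀ j : ℤ, ∀ x ∈ 𝒦 j, ι x ∈ ℳ j)
    {x : M} {e : ℤ} (hx : x ∈ ℳ e) (hxr : x ∈ LinearMap.range ι) :
    ∃ b ∈ 𝒦 e, ι b = x := by
  obtain ⟨b0, rfl⟩ := hxr
  obtain ⟨s, c, hc, hc0, hb0⟩ := decomp_exists hK b0
  have hsum : ∑ j ∈ s, ι (c j) ∈ ℳ e := by
    rw [← map_sum, ← hb0]; exact hx
  have hz := decomp_uniq hM s (fun j => ι (c j)) (fun j => hgrι j _ (hc j)) e hsum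
  have hbe : b0 = c e := by
    rw [hb0, Finset.sum_eq_single e
      (fun b hb hbe => hinj (show ι (c b) = ι 0 by rw [map_zero]; exact hz b hb hbe))
      (fun he => hc0 e he)]
  exact ⟨c e, hc e, by rw [← hbe]⟩

lemma graded_surj {N : Type} [AddCommGroup N] [Module Rᵐᵒᵖ N] [Module k N]
    {𝒩 : ℤ → Submodule k N}
    (hM : DirectSum.IsInternal ℳ) (hN : DirectSum.IsInternal 𝒩)
    (π : M →ₗ[Rᵐᵒᵖ] N) (hsurj : Function.Surjective π)
    (hgrπ : ∀ j : ℤ, ∀ x ∈ ℳ j, π x ∈ 𝒩 j)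
    {y : N} {e : ℤ} (hy : y ∈ 𝒩 e) :
    ∃ x ∈ ℳ e, π x = y := by
  obtain ⟨x0, rfl⟩ := hsurj y
  obtain ⟨s, c, hc, hc0, hx0⟩ := decomp_exists hM x0
  have hsum : ∑ j ∈ s, π (c j) ∈ 𝒩 e := by
    rw [← map_sum, ← hx0]; exact hy
  have hz := decomp_uniq hN s (fun j => π (c j)) (fun j => hgrπ j _ (hc j)) e hsum
  refine ⟨c e, hc e, ?_⟩
  conv_rhs => rw [hx0]
  rw [map_sum, Finset.sum_eq_single e hz (fun he => by rw [hc0 e he, map_zero])]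

lemma homog_gens (hfK : Module.Finite Rᵐᵒᵖ K) {mK : ℤ}
    (hgen : GenLE k R K 𝒦 (⊤ : Submodule Rᵐᵒᵖ K) mK) :
    ∃ (t : ℕ) (c : Fin t → K) (dc : Fin t → ℤ),
      (∀ i, dc i ≤ mK) ∧ (∀ i, c i ∈ 𝒦 (dc i)) ∧
      Submodule.span Rᵐᵒᵖ (Set.range c) = ⊤ := by
  classical
  obtain ⟨T, hT⟩ := Module.finite_def.mp hfK
  have hmem : ∀ y : K, ∃ U : Finset K,
      ↑U ⊆ {x : K | x ∈ (⊤ : Submodule Rᵐᵒᵖ K) ∧ ∃ j ≤ mK, x ∈ 𝒦 j} ∧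
      y ∈ Submodule.span Rᵐᵒᵖ (↑U : Set K) :=
    fun y => Submodule.mem_span_finite_of_mem_span (hgen Submodule.mem_top)
  choose Ufun hU1 hU2 using hmem
  set U : Finset K := T.biUnion Ufun with hUdef
  have hUS : (↑U : Set K) ⊆ {x : K | x ∈ (⊤ : Submodule Rᵐᵒᵖ K) ∧ ∃ j ≤ mK, x ∈ 𝒦 j} := by
    intro x hx
    obtain ⟨y, _, hxy⟩ := Finset.mem_biUnion.mp hx
    exact hU1 y hxy
  have hUspan : Submodule.span Rᵐᵒᵖ (↑U : Set K) = ⊤ := by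
    rw [eq_top_iff, ← hT]
    apply Submodule.span_le.mpr
    intro y hy
    exact Submodule.span_mono
      (Finset.coe_subset.mpr (Finset.subset_biUnion_of_mem Ufun (Finset.mem_coe.mp hy)))
      (hU2 y)
  have hrange : Set.range (fun i : Fin U.card => ((U.equivFin.symm i : {x // x ∈ U}) : K))
      = (↑U : Set K) := by
    rw [show (fun i : Fin U.card => ((U.equivFin.symm i : {x // x ∈ U}) : K))
        = (fun x : {x // x ∈ U} => (x : K)) ∘ U.equivFin.symm from rfl,
      Function.Surjective.range_comp U.equivFin.symm.surjective]
    exact Subtype.range_coe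
  have hdeg : ∀ i : Fin U.card, ∃ j, j ≤ mK ∧ ((U.equivFin.symm i : {x // x ∈ U}) : K) ∈ 𝒦 j := by
    intro i
    obtain ⟨-, j, hj1, hj2⟩ := hUS (U.equivFin.symm i).2
    exact ⟨j, hj1, hj2⟩
  choose dc hdc1 hdc2 using hdeg
  exact ⟨U.card, _, dc, hdc1, hdc2, by rw [hrange]; exact hUspan⟩

lemma exists_genLE (hK : DirectSum.IsInternal 𝒦) (hfK : Module.Finite Rᵐᵒᵖ K) :
    ∃ mK : ℕ, GenLE k R K 𝒦 (⊤ : Submodule Rᵐᵒᵖ K) (mK : ℤ) := by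
  classical
  obtain ⟨T, hT⟩ := Module.finite_def.mp hfK
  choose s c hc hc0 hsum using fun y : K => decomp_exists hK y
  set E : Finset ℤ := T.biUnion s with hE
  refine ⟨E.sup Int.toNat, ?_⟩
  have key : Submodule.span Rᵐᵒᵖ (↑T : Set K) ≤ Submodule.span Rᵐᵒᵖ
      {x : K | x ∈ (⊤ : Submodule Rᵐᵒᵖ K) ∧ ∃ j ≤ ((E.sup Int.toNat : ℕ) : ℤ), x ∈ 𝒦 j} := by
    apply Submodule.span_le.mpr
    intro y hy
    have : y = ∑ j ∈ s y, c y j := hsum y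
    rw [SetLike.mem_coe, this]
    apply Submodule.sum_mem
    intro j hj
    apply Submodule.subset_span
    refine ⟨Submodule.mem_top, j, ?_, hc y j⟩
    have hjE : j ∈ E := Finset.mem_biUnion.mpr ⟨y, Finset.mem_coe.mp hy, hj⟩
    calc j ≤ (j.toNat : ℤ) := Int.self_le_toNat j
    _ ≤ _ := by exact_mod_cast Finset.le_sup hjE
  rw [hT] at key
  exact key

end TwoMods

end NCG

end Helpers3

namespace NCG

open MulOpposite

section Wits

variable {k R : Type} [Field k] [Ring R] [Algebra k R] {𝒜 : ℕ → Submodule k R}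
variable {K M N : Type}
  [AddCommGroup K] [Module Rᵐᵒᵖ K] [Module k K]
  [AddCommGroup M] [Module Rᵐᵒᵖ M] [Module k M]
  [AddCommGroup N] [Module Rᵐᵒᵖ N] [Module k N]
  {𝒦 : ℤ → Submodule k K} {ℳ : ℤ → Submodule k M} {𝒩 : ℤ → Submodule k N}

set_option linter.unusedSectionVars false

/-- solutions transfer along an injective map. -/
lemma isSol_of_inj (ι : K →ₗ[Rᵐᵒᵖ] M) (hinj : Function.Injective ι)
    {n : ℕ} (a : Fin n → K) (v : Fin n → R) :
    IsSol R K a v ↔ IsSol R M (fun i => ι (a i)) v := by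
  unfold IsSol
  rw [show ∑ i, op (v i) • ι (a i) = ι (∑ i, op (v i) • a i) by
    rw [map_sum]; exact Finset.sum_congr rfl fun i _ => (map_smul ι _ _).symm]
  constructor
  · intro h; rw [h, map_zero]
  · intro h; exact hinj (by rw [map_zero]; exact h)

/-- W1: a witness for `M` is a witness for `K`. -/
lemma wit_K (ι : K →ₗ[Rᵐᵒᵖ] M) (hinj : Function.Injective ι)
    (hgrι : ∀ j : ℤ, ∀ x ∈ 𝒦 j, ι x ∈ ℳ j)
    (DM : ℕ → ℕ) (hDM : WitnessEC k R M 𝒜 ℳ DM) :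
    WitnessEC k R K 𝒜 𝒦 DM := by
  refine ⟨hDM.1, fun d n a dg ha hdg v hv => ?_⟩
  have hset : {w : Fin n → R | IsSol R K a w ∧
        ∃ j ≤ ((DM d : ℕ) : ℤ), FreeHomog k R 𝒜 dg w j}
      = {w : Fin n → R | IsSol R M (fun i => ι (a i)) w ∧
        ∃ j ≤ ((DM d : ℕ) : ℤ), FreeHomog k R 𝒜 dg w j} :=
    Set.ext fun w => by rw [Set.mem_setOf_eq, Set.mem_setOf_eq, isSol_of_inj ι hinj]
  rw [hset]
  exact hDM.2 d n (fun i => ι (a i)) dg (fun i => hgrι _ _ (ha i)) hdg v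
    ((isSol_of_inj ι hinj a v).mp hv)

/-- W2: witnesses for `K` and `N` give a witness for `M`. -/
lemma wit_M (hconn : IsConnAlg k R 𝒜)
    (hgK : IsGradedMod k R K 𝒜 𝒦) (hgM : IsGradedMod k R M 𝒜 ℳ)
    (ι : K →ₗ[Rᵐᵒᵖ] M) (π : M →ₗ[Rᵐᵒᵖ] N)
    (hinj : Function.Injective ι) (hexact : LinearMap.range ι = LinearMap.ker π)
    (hgrι : ∀ j : ℤ, ∀ x ∈ 𝒦 j, ι x ∈ ℳ j)
    (hgrπ : ∀ j : ℤ, ∀ x ∈ ℳ j, π x ∈ 𝒩 j)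
    (DK DN : ℕ → ℕ) (hDK : WitnessEC k R K 𝒜 𝒦 DK) (hDN : WitnessEC k R N 𝒜 𝒩 DN) :
    WitnessEC k R M 𝒜 ℳ (fun d => DK (max d (DN d))) := by
  classical
  constructor
  · intro d
    exact le_trans (le_max_left d (DN d)) (hDK.1 _)
  intro d n a dg ha hdg v hv
  set d' : ℕ := max d (DN d) with hd'
  -- pass to N
  have haN : ∀ i, π (a i) ∈ 𝒩 (dg i) := fun i => hgrπ _ _ (ha i)
  have hvN : IsSol R N (fun i => π (a i)) v := by
    unfold IsSol at hv ⊢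
    rw [show ∑ i, op (v i) • π (a i) = π (∑ i, op (v i) • a i) by
      rw [map_sum]; exact Finset.sum_congr rfl fun i _ => (map_smul π _ _).symm,
      hv, map_zero]
  have hspanN := hDN.2 d n (fun i => π (a i)) dg haN hdg v hvN
  rw [Submodule.mem_span_set'] at hspanN
  obtain ⟨mm, r, wsub, hsum⟩ := hspanN
  set w : Fin mm → Fin n → R := fun j => (wsub j : Fin n → R) with hw
  have hwsol : ∀ j, IsSol R N (fun i => π (a i)) (w j) := fun j => (wsub j).2.1
  choose e he hwh using fun j => (wsub j).2.2
  set sS : Fin mm → M := fun j => ∑ i, op (w j i) • a i with hsS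
  have hsmem : ∀ j, sS j ∈ ℳ (e j) := fun j => homog_sum_mem hgM.1 ha (hwh j)
  have hsker : ∀ j, sS j ∈ LinearMap.range ι := by
    intro j
    rw [hexact, LinearMap.mem_ker, map_sum]
    rw [show ∑ i, π (op (w j i) • a i) = ∑ i, op (w j i) • π (a i) from
      Finset.sum_congr rfl fun i _ => map_smul π _ _]
    exact hwsol j
  choose b hb hιb using fun j =>
    graded_preimage hgK.2 hgM.2 ι hinj hgrι (hsmem j) (hsker j)
  set r' : Fin mm → R := fun j => unop (r j) with hr'
  have hveq : ∀ i, v i = ∑ j, w j i * r' j := by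
    intro i
    rw [← hsum]
    simp only [Finset.sum_apply, Pi.smul_apply, MulOpposite.smul_eq_mul_unop]
    rfl
  -- key computation
  have hkey : ∀ u : Fin mm → R,
      ι (∑ j, op (u j) • b j) = ∑ i, op (∑ j, w j i * u j) • a i := by
    intro u
    rw [sum_op_smul_comm, map_sum]
    exact Finset.sum_congr rfl fun j _ => by rw [map_smul, hιb j]
  have hKsol : IsSol R K b r' := by
    apply hinj
    rw [map_zero, hkey]
    rw [show ∑ i, op (∑ j, w j i * r' j) • a i = ∑ i, op (v i) • a i from
      Finset.sum_congr rfl fun i _ => by rw [← hveq i]]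
    exact hv
  have hespan := hDK.2 d' mm b e hb
    (fun j => le_trans (he j) (by exact_mod_cast le_max_right d (DN d))) r' hKsol
  -- push forward through Φ
  set Φ : (Fin mm → R) →ₗ[Rᵐᵒᵖ] (Fin n → R) :=
    { toFun := fun u i => ∑ j, w j i * u j
      map_add' := fun u1 u2 => funext fun i => by
        simp [mul_add, Finset.sum_add_distrib]
      map_smul' := fun cop u => funext fun i => by
        simp only [Pi.smul_apply, MulOpposite.smul_eq_mul_unop, RingHom.id_apply]
        rw [Finset.sum_mul]
        exact Finset.sum_congr rfl fun j _ => (mul_assoc _ _ _).symm } with hΦ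
  have hvΦ : v = Φ r' := funext hveq
  rw [hvΦ]
  apply mem_span_image Φ ?_ hespan
  rintro x ⟨u, ⟨husol, f, hf, huh⟩, rfl⟩
  refine ⟨?_, f, hf, ?_⟩
  · show ∑ i, op (∑ j, w j i * u j) • a i = 0
    rw [← hkey, husol, map_zero]
  · intro i
    show ∑ j, w j i * u j ∈ grZ k R 𝒜 (f - dg i)
    apply Submodule.sum_mem
    intro j _
    have h := grZ_mul hconn.1 (hwh j i) (huh j)
    rwa [show e j - dg i + (f - e j) = f - dg i by ring] at h

/-- W3: a witness for `M` plus a bound on generators of `K` gives a witness for `N`. -/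
lemma wit_N (hgK : IsGradedMod k R K 𝒜 𝒦) (hgM : IsGradedMod k R M 𝒜 ℳ)
    (hgN : IsGradedMod k R N 𝒜 𝒩) (hfK : Module.Finite Rᵐᵒᵖ K)
    (ι : K →ₗ[Rᵐᵒᵖ] M) (π : M →ₗ[Rᵐᵒᵖ] N)
    (hinj : Function.Injective ι) (hsurj : Function.Surjective π)
    (hexact : LinearMap.range ι = LinearMap.ker π)
    (hgrι : ∀ j : ℤ, ∀ x ∈ 𝒦 j, ι x ∈ ℳ j)
    (hgrπ : ∀ j : ℤ, ∀ x ∈ ℳ j, π x ∈ 𝒩 j)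
    (DM : ℕ → ℕ) (mK : ℕ) (hDM : WitnessEC k R M 𝒜 ℳ DM)
    (hgen : GenLE k R K 𝒦 (⊤ : Submodule Rᵐᵒᵖ K) (mK : ℤ)) :
    WitnessEC k R N 𝒜 𝒩 (fun d => DM (max d mK)) := by
  classical
  obtain ⟨t, c, dc, hdc, hcmem, hcspan⟩ := homog_gens hfK hgen
  constructor
  · intro d
    exact le_trans (le_max_left d mK) (hDM.1 _)
  intro d n a dg ha hdg v hv
  set d' : ℕ := max d mK with hd'
  -- homogeneous lifts of the coefficients
  choose a' ha' hπa' using fun i => graded_surj hgM.2 hgN.2 π hsurj hgrπ (ha i)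
  -- the big equation in M
  set A : Fin (n + t) → M := Fin.append a' (fun j => ι (c j)) with hA
  set DG : Fin (n + t) → ℤ := Fin.append dg dc with hDG
  have hAmem : ∀ l, A l ∈ ℳ (DG l) := by
    refine Fin.addCases (fun i => ?_) (fun j => ?_)
    · simp only [hA, hDG, Fin.append_left]; exact ha' i
    · simp only [hA, hDG, Fin.append_right]; exact hgrι _ _ (hcmem j)
  have hDGle : ∀ l, DG l ≤ (d' : ℤ) := by
    refine Fin.addCases (fun i => ?_) (fun j => ?_)
    · simp only [hDG, Fin.append_left]
      exact le_trans (hdg i) (by exact_mod_cast le_max_left d mK)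
    · simp only [hDG, Fin.append_right]
      exact le_trans (hdc j) (by exact_mod_cast le_max_right d mK)
  -- πι = 0
  have hπι : ∀ y : K, π (ι y) = 0 := fun y => by
    have : ι y ∈ LinearMap.ker π := hexact ▸ LinearMap.mem_range_self ι y
    exact this
  -- the lifted solution
  have hker : ∑ i, op (v i) • a' i ∈ LinearMap.range ι := by
    rw [hexact, LinearMap.mem_ker, map_sum]
    rw [show ∑ i, π (op (v i) • a' i) = ∑ i, op (v i) • a i from
      Finset.sum_congr rfl fun i _ => by rw [map_smul, hπa' i]]
    exact hv
  obtain ⟨x, hx⟩ := hker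
  have hxspan : x ∈ Submodule.span Rᵐᵒᵖ (Set.range c) := hcspan ▸ Submodule.mem_top
  obtain ⟨u', hu'⟩ := Submodule.mem_span_range_iff_exists_fun Rᵐᵒᵖ |>.mp hxspan
  set V : Fin (n + t) → R := Fin.append v (fun j => -(unop (u' j))) with hV
  have hVsol : IsSol R M A V := by
    unfold IsSol
    rw [Fin.sum_univ_add]
    rw [show ∑ i, op (V (Fin.castAdd t i)) • A (Fin.castAdd t i)
        = ∑ i, op (v i) • a' i from Finset.sum_congr rfl fun i _ => by
      simp only [hV, hA, Fin.append_left]]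
    rw [show ∑ j, op (V (Fin.natAdd n j)) • A (Fin.natAdd n j)
        = -(ι (∑ j, u' j • c j)) from ?_]
    · rw [hu', hx, add_neg_cancel]
    · rw [map_sum, ← Finset.sum_neg_distrib]
      exact Finset.sum_congr rfl fun j _ => by
        simp only [hV, hA, Fin.append_right, op_neg, op_unop, neg_smul, map_smul]
  have hVspan := hDM.2 d' (n + t) A DG hAmem hDGle V hVsol
  set Ψ : (Fin (n + t) → R) →ₗ[Rᵐᵒᵖ] (Fin n → R) :=
    LinearMap.funLeft Rᵐᵒᵖ R (Fin.castAdd t) with hΨ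
  have hvΨ : v = Ψ V := funext fun i => by
    simp only [hΨ, LinearMap.funLeft_apply, hV, Fin.append_left]
  rw [hvΨ]
  apply mem_span_image Ψ ?_ hVspan
  rintro x0 ⟨wf, ⟨hwsol, f, hf, hwh⟩, rfl⟩
  refine ⟨?_, f, hf, ?_⟩
  · show ∑ i, op ((Ψ wf) i) • a i = 0
    have hsplit : ∑ i, op (wf (Fin.castAdd t i)) • a' i
        = -∑ j, op (wf (Fin.natAdd n j)) • ι (c j) := by
      rw [eq_neg_iff_add_eq_zero]
      rw [show ∑ i, op (wf (Fin.castAdd t i)) • a' i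
          + ∑ j, op (wf (Fin.natAdd n j)) • ι (c j)
          = ∑ l, op (wf l) • A l from ?_]
      · exact hwsol
      · rw [Fin.sum_univ_add]
        congr 1
        · exact Finset.sum_congr rfl fun i _ => by simp only [hA, Fin.append_left]
        · exact Finset.sum_congr rfl fun j _ => by simp only [hA, Fin.append_right]
    rw [show ∑ i, op ((Ψ wf) i) • a i = π (∑ i, op (wf (Fin.castAdd t i)) • a' i) from ?_]
    · rw [hsplit, map_neg, map_sum]
      rw [show ∑ j, π (op (wf (Fin.natAdd n j)) • ι (c j))
          = ∑ j, op (wf (Fin.natAdd n j)) • π (ι (c j)) from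
        Finset.sum_congr rfl fun j _ => map_smul π _ _]
      simp [hπι]
    · rw [map_sum]
      exact Finset.sum_congr rfl fun i _ => by
        rw [map_smul, hπa' i]
        simp only [hΨ, LinearMap.funLeft_apply]
  · intro i
    show wf (Fin.castAdd t i) ∈ grZ k R 𝒜 (f - dg i)
    have h := hwh (Fin.castAdd t i)
    rwa [show DG (Fin.castAdd t i) = dg i by simp only [hDG, Fin.append_left]] at h

end Wits

end NCG

namespace NCG

/-- in a short exact sequence `0 → K → M → N → 0` of finitely generated
graded right modules, if two of the modules are effectively coherent then so is the
third, with the stated witness transfers. -/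
theorem statement_3 (k R : Type) [Field k] [Ring R] [Algebra k R]
    (𝒜 : ℕ → Submodule k R) (hconn : IsConnAlg k R 𝒜)
    (K M N : Type)
    [AddCommGroup K] [Module Rᵐᵒᵖ K] [Module k K]
    [AddCommGroup M] [Module Rᵐᵒᵖ M] [Module k M]
    [AddCommGroup N] [Module Rᵐᵒᵖ N] [Module k N]
    (𝒦 : ℤ → Submodule k K) (ℳ : ℤ → Submodule k M) (𝒩 : ℤ → Submodule k N)
    (hgK : IsGradedMod k R K 𝒜 𝒦) (hgM : IsGradedMod k R M 𝒜 ℳ)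
    (hgN : IsGradedMod k R N 𝒜 𝒩)
    (hfK : Module.Finite Rᵐᵒᵖ K) (hfM : Module.Finite Rᵐᵒᵖ M)
    (hfN : Module.Finite Rᵐᵒᵖ N)
    (ι : K →ₗ[Rᵐᵒᵖ] M) (π : M →ₗ[Rᵐᵒᵖ] N)
    (hinj : Function.Injective ι) (hsurj : Function.Surjective π)
    (hexact : LinearMap.range ι = LinearMap.ker π)
    (hgrι : ∀ j : ℤ, ∀ x ∈ 𝒦 j, ι x ∈ ℳ j)
    (hgrπ : ∀ j : ℤ, ∀ x ∈ ℳ j, π x ∈ 𝒩 j) :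
    ((EffCoh k R K 𝒜 𝒦 → EffCoh k R M 𝒜 ℳ → EffCoh k R N 𝒜 𝒩) ∧
     (EffCoh k R K 𝒜 𝒦 → EffCoh k R N 𝒜 𝒩 → EffCoh k R M 𝒜 ℳ) ∧
     (EffCoh k R M 𝒜 ℳ → EffCoh k R N 𝒜 𝒩 → EffCoh k R K 𝒜 𝒦)) ∧
    (∀ DM : ℕ → ℕ, WitnessEC k R M 𝒜 ℳ DM → WitnessEC k R K 𝒜 𝒦 DM) ∧
    (∀ DK DN : ℕ → ℕ, WitnessEC k R K 𝒜 𝒦 DK → WitnessEC k R N 𝒜 𝒩 DN →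
      WitnessEC k R M 𝒜 ℳ (fun d => DK (max d (DN d)))) ∧
    (∀ (DM : ℕ → ℕ) (mK : ℕ), WitnessEC k R M 𝒜 ℳ DM →
      GenLE k R K 𝒦 (⊤ : Submodule Rᵐᵒᵖ K) (mK : ℤ) →
      WitnessEC k R N 𝒜 𝒩 (fun d => DM (max d mK))) := by
  constructor
  · refine ⟨?_, ?_, ?_⟩
    · intro _ hM'
      obtain ⟨DM, hDM⟩ := hM'
      obtain ⟨mK, hmK⟩ := exists_genLE hgK.2 hfK
      exact ⟨_, wit_N hgK hgM hgN hfK ι π hinj hsurj hexact hgrι hgrπ DM mK hDM hmK⟩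
    · rintro ⟨DK, hDK⟩ ⟨DN, hDN⟩
      exact ⟨_, wit_M hconn hgK hgM ι π hinj hexact hgrι hgrπ DK DN hDK hDN⟩
    · rintro ⟨DM, hDM⟩ _
      exact ⟨DM, wit_K ι hinj hgrι DM hDM⟩
  refine ⟨fun DM hDM => wit_K ι hinj hgrι DM hDM,
    fun DK DN hDK hDN => wit_M hconn hgK hgM ι π hinj hexact hgrι hgrπ DK DN hDK hDN,
    fun DM mK hDM hgen =>
      wit_N hgK hgM hgN hfK ι π hinj hsurj hexact hgrι hgrπ DM mK hDM hgen⟩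

end NCG
end

section
/- Let R be a connected graded k-algebra, M a finitely generated graded right R-module, and let D ≥ d be integers such that for all homogeneous a_1,…,a_n ∈ M of degrees ≤ d, the module of solutions of a_1x_1+⋯+a_nx_n = 0 is generated in degrees ≤ D. Then for any two graded submodules K, L ⊆ M generated in degrees ≤ d, the intersection K ∩ L is generated in degrees ≤ D. -/
/-!
If `z ∈ K ∩ L`, write `z = ∑ fᵢ aᵢ = ∑ gⱼ bⱼ` with homogeneous generators `aᵢ ∈ K`, `bⱼ ∈ L`
of degrees `≤ d`. Then `(f, -g)` solves the equation `∑ aᵢ xᵢ + ∑ bⱼ yⱼ = 0`, so it is a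
combination of homogeneous solutions `(x, y)` of degree `≤ D`. Each such solution gives the
homogeneous element `∑ aᵢ xᵢ = -∑ bⱼ yⱼ` of `K ∩ L` of the same degree, and the map
`(x, y) ↦ ∑ aᵢ xᵢ` is linear and sends `(f, -g)` to `z`.
-/

open MulOpposite

namespace NCG

section

variable {R M : Type} [Ring R] [AddCommGroup M] [Module Rᵐᵒᵖ M]

variable (R) in
def evalMap {n : ℕ} (a : Fin n → M) : (Fin n → R) →ₗ[Rᵐᵒᵖ] M where
  toFun w := ∑ i, op (w i) • a i
  map_add' w w' := by
    simp only [Pi.add_apply, op_add, add_smul, Finset.sum_add_distrib]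
  map_smul' r w := by
    simp only [Pi.smul_apply, smul_eq_mul_unop, op_mul, op_unop, mul_smul, Finset.smul_sum,
      RingHom.id_apply]

theorem evalMap_apply {n : ℕ} (a : Fin n → M) (w : Fin n → R) :
    evalMap R a w = ∑ i, op (w i) • a i :=
  rfl

theorem isSol_iff_evalMap_eq_zero {n : ℕ} (a : Fin n → M) (w : Fin n → R) :
    IsSol R M a w ↔ evalMap R a w = 0 :=
  Iff.rfl

theorem evalMap_append {p q : ℕ} (a : Fin p → M) (b : Fin q → M) (w : Fin (p + q) → R) :
    evalMap R (Fin.append a b) w =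
      evalMap R a (w ∘ Fin.castAdd q) + evalMap R b (w ∘ Fin.natAdd p) := by
  simp only [evalMap_apply, Fin.sum_univ_add, Fin.append_left, Fin.append_right,
    Function.comp_apply]

theorem evalMap_mem {N : Submodule Rᵐᵒᵖ M} {n : ℕ} {a : Fin n → M} (ha : ∀ i, a i ∈ N)
    (w : Fin n → R) : evalMap R a w ∈ N := by
  rw [evalMap_apply]
  exact N.sum_mem fun i _ => N.smul_mem _ (ha i)

theorem evalMap_mem_inf_of_isSol_append {K L : Submodule Rᵐᵒᵖ M} {p q : ℕ}
    {a : Fin p → M} {b : Fin q → M} (ha : ∀ i, a i ∈ K) (hb : ∀ i, b i ∈ L)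
    {w : Fin (p + q) → R} (hw : IsSol R M (Fin.append a b) w) :
    evalMap R a (w ∘ Fin.castAdd q) ∈ K ⊓ L := by
  rw [isSol_iff_evalMap_eq_zero, evalMap_append, add_eq_zero_iff_eq_neg] at hw
  exact ⟨evalMap_mem ha _, hw ▸ L.neg_mem (evalMap_mem hb _)⟩

variable {k : Type} [Field k] [Module k M]

theorem GenLE.exists_evalMap_eq {ℳ : ℤ → Submodule k M} {N : Submodule Rᵐᵒᵖ M} {d : ℤ}
    (hN : GenLE k R M ℳ N d) {z : M} (hz : z ∈ N) :
    ∃ (n : ℕ) (a : Fin n → M) (dg : Fin n → ℤ) (f : Fin n → R),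
      (∀ i, a i ∈ N) ∧ (∀ i, dg i ≤ d) ∧ (∀ i, a i ∈ ℳ (dg i)) ∧ evalMap R a f = z := by
  obtain ⟨n, f, a, rfl⟩ := Submodule.mem_span_set'.mp (hN hz)
  choose dg hdg ha using fun i => (a i).2.2
  exact ⟨n, fun i => a i, dg, fun i => unop (f i), fun i => (a i).2.1, hdg, ha, by
    simp only [evalMap_apply, op_unop]⟩

variable [Algebra k R]

theorem smul_mem_of_mem_grZ {𝒜 : ℕ → Submodule k R} {ℳ : ℤ → Submodule k M}
    (hgr : IsGradedMod k R M 𝒜 ℳ) {e j : ℤ} {r : R} {x : M} (hr : r ∈ grZ k R 𝒜 e)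
    (hx : x ∈ ℳ j) : op r • x ∈ ℳ (j + e) := by
  unfold grZ at hr
  split_ifs at hr with he
  · simpa only [Int.toNat_of_nonneg he] using hgr.1 _ j r hr x hx
  · rw [(Submodule.mem_bot k).mp hr, op_zero, zero_smul]
    exact zero_mem _

theorem evalMap_mem_of_freeHomog {𝒜 : ℕ → Submodule k R} {ℳ : ℤ → Submodule k M}
    (hgr : IsGradedMod k R M 𝒜 ℳ) {n : ℕ} {a : Fin n → M} {dg : Fin n → ℤ}
    (ha : ∀ i, a i ∈ ℳ (dg i)) {w : Fin n → R} {j : ℤ} (hw : FreeHomog k R 𝒜 dg w j) :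
    evalMap R a w ∈ ℳ j := by
  rw [evalMap_apply]
  refine Submodule.sum_mem _ fun i _ => ?_
  simpa only [add_sub_cancel] using smul_mem_of_mem_grZ hgr (hw i) (ha i)

theorem FreeHomog.comp_castAdd {𝒜 : ℕ → Submodule k R} {p q : ℕ} {dga : Fin p → ℤ}
    {dgb : Fin q → ℤ} {w : Fin (p + q) → R} {j : ℤ}
    (hw : FreeHomog k R 𝒜 (Fin.append dga dgb) w j) :
    FreeHomog k R 𝒜 dga (w ∘ Fin.castAdd q) j := fun i => by
  simpa only [Fin.append_left, Function.comp_apply] using hw (Fin.castAdd q i)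

end

theorem statement_4_general (k R : Type) [Field k] [Ring R] [Algebra k R]
    (𝒜 : ℕ → Submodule k R)
    (M : Type) [AddCommGroup M] [Module Rᵐᵒᵖ M] [Module k M]
    (ℳ : ℤ → Submodule k M) (hgr : IsGradedMod k R M 𝒜 ℳ)
    (d D : ℤ)
    (hsol : ∀ (n : ℕ) (a : Fin n → M) (dg : Fin n → ℤ),
      (∀ i, a i ∈ ℳ (dg i)) → (∀ i, dg i ≤ d) → SolGenLE k R M 𝒜 a dg D)
    (K L : Submodule Rᵐᵒᵖ M)
    (hK : GenLE k R M ℳ K d) (hL : GenLE k R M ℳ L d) :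
    GenLE k R M ℳ (K ⊓ L) D := by
  rintro z ⟨hzK, hzL⟩
  obtain ⟨p, a, dga, f, haK, hdga, ha, rfl⟩ := hK.exists_evalMap_eq hzK
  obtain ⟨q, b, dgb, g, hbL, hdgb, hb, hgz⟩ := hL.exists_evalMap_eq hzL
  set v := Fin.append f (-g)
  have hvf : v ∘ Fin.castAdd q = f := funext (Fin.append_left f (-g))
  have hvg : v ∘ Fin.natAdd p = -g := funext (Fin.append_right f (-g))
  have hv : IsSol R M (Fin.append a b) v := by
    rw [isSol_iff_evalMap_eq_zero, evalMap_append, hvf, hvg, map_neg, hgz, add_neg_cancel]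
  have hgen := hsol _ _ (Fin.append dga dgb)
    ((Fin.forall_fin_add _).mpr ⟨by simpa only [Fin.append_left] using ha,
      by simpa only [Fin.append_right] using hb⟩)
    ((Fin.forall_fin_add _).mpr ⟨by simpa only [Fin.append_left] using hdga,
      by simpa only [Fin.append_right] using hdgb⟩) v hv
  let φ := evalMap R a ∘ₗ LinearMap.funLeft Rᵐᵒᵖ R (Fin.castAdd q)
  have hφ : φ v = evalMap R a f := congrArg (evalMap R a) hvf
  rw [← hφ]
  refine (Submodule.map_span_le φ _ _).mpr ?_ (Submodule.mem_map_of_mem hgen)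
  rintro w ⟨hw, j, hjD, hwj⟩
  exact Submodule.subset_span ⟨evalMap_mem_inf_of_isSol_append haK hbL hw, j, hjD,
    evalMap_mem_of_freeHomog hgr ha hwj.comp_castAdd⟩

/-- if solution modules of equations with coefficients of degrees at most
`d` in `M` are generated in degrees at most `D ≥ d`, then the intersection of two
submodules generated in degrees at most `d` is generated in degrees at most `D`. -/
theorem statement_4 (k R : Type) [Field k] [Ring R] [Algebra k R]
    (𝒜 : ℕ → Submodule k R) (hconn : IsConnAlg k R 𝒜)
    (M : Type) [AddCommGroup M] [Module Rᵐᵒᵖ M] [Module k M]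
    (ℳ : ℤ → Submodule k M) (hgr : IsGradedMod k R M 𝒜 ℳ)
    (hfg : Module.Finite Rᵐᵒᵖ M)
    (d D : ℤ) (hdD : d ≤ D)
    (hsol : ∀ (n : ℕ) (a : Fin n → M) (dg : Fin n → ℤ),
      (∀ i, a i ∈ ℳ (dg i)) → (∀ i, dg i ≤ d) → SolGenLE k R M 𝒜 a dg D)
    (K L : Submodule Rᵐᵒᵖ M)
    (hK : GenLE k R M ℳ K d) (hL : GenLE k R M ℳ L d) :
    GenLE k R M ℳ (K ⊓ L) D :=
  statement_4_general k R 𝒜 M ℳ hgr d D hsol K L hK hL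

end NCG
end
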